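/- arXiv:2501.18526 — 2 statements merged into one kernel-verified Lean document; each statement's English description precedes it below -/
import Mathlib

section
/- Let U ∈ C^∞([0,∞), W^{1,∞}(B)) satisfy ‖U‖_{C^0([n,n+1], L∞(B))} ≤ C₀·5^{-n} and ‖U(t,·)‖_{W^{1,∞}(B)} ≤ C₀ for all n ≥ 0 and t ≥ 0. Fix α ∈ (0,1), let τ_n := (1/2)(1 − 5^{α−1})·5^{(α−1)n}, t_n := Σ_{j=0}^{n−1} τ_j, and define v(t,x) := τ_n^{-1} U(τ_n^{-1}(t − t_n) + n, x) for t ∈ [t_n, t_{n+1}], and v(t,x) := 0 for t ≥ 1/2. Then sup_{t∈[0,1]} ‖v(t,·)‖_{C^α(B)} < ∞, where ‖f‖_{C^α} interpolates as ‖f‖_{C^α} ≤ C‖f‖_{L∞}^{1−α}‖f‖_{W^{1,∞}}^{α}. -/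
/-- the time-rescaled vector field
`v(t,x) = τ_n⁻¹ U(τ_n⁻¹(t - t_n) + n, x)` on `[t_n, t_{n+1}]`, `v = 0` for `t ≥ 1/2`,
is uniformly bounded in `C^α(B)` (sup norm plus α-Hölder seminorm). -/
theorem stmt16 (α : ℝ) (hα : α ∈ Set.Ioo (0:ℝ) 1)
    (B : Set (ℝ × ℝ)) (C₀ : ℝ) (hC₀ : 0 < C₀)
    (U : ℝ → ℝ × ℝ → ℝ × ℝ)
    (hULinf : ∀ n : ℕ, ∀ t ∈ Set.Icc (n : ℝ) ((n : ℝ) + 1), ∀ x ∈ B,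
      ‖U t x‖ ≤ C₀ * (5:ℝ) ^ (-(n : ℝ)))
    (hUW : ∀ t : ℝ, 0 ≤ t →
      (∀ x ∈ B, ‖U t x‖ ≤ C₀) ∧ ∀ x ∈ B, ∀ y ∈ B, ‖U t x - U t y‖ ≤ C₀ * ‖x - y‖)
    (τ : ℕ → ℝ)
    (hτ : ∀ n : ℕ, τ n = (1/2) * (1 - (5:ℝ) ^ (α - 1)) * (5:ℝ) ^ ((α - 1) * n))
    (tt : ℕ → ℝ) (htt : ∀ n : ℕ, tt n = ∑ j ∈ Finset.range n, τ j)
    (v : ℝ → ℝ × ℝ → ℝ × ℝ)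
    (hv : ∀ n : ℕ, ∀ t ∈ Set.Icc (tt n) (tt (n + 1)), ∀ x : ℝ × ℝ,
      v t x = (τ n)⁻¹ • U ((τ n)⁻¹ * (t - tt n) + n) x)
    (hv0 : ∀ t : ℝ, (1/2 : ℝ) ≤ t → ∀ x : ℝ × ℝ, v t x = 0) :
    ∃ M : ℝ, ∀ t ∈ Set.Icc (0:ℝ) 1,
      (∀ x ∈ B, ‖v t x‖ ≤ M) ∧
      ∀ x ∈ B, ∀ y ∈ B, ‖v t x - v t y‖ ≤ M * ‖x - y‖ ^ α := by

  obtain ⟨hα0, hα1⟩ := hα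
  classical
  set q : ℝ := (5:ℝ) ^ (α - 1) with hqdef
  have hq0 : 0 < q := Real.rpow_pos_of_pos (by norm_num) _
  have hq1 : q < 1 := Real.rpow_lt_one_of_one_lt_of_neg (by norm_num) (by linarith)
  set c : ℝ := (1/2) * (1 - q) with hcdef
  have hc0 : 0 < c := by
    have : 0 < 1 - q := by linarith
    positivity
  have hqn : ∀ n : ℕ, q ^ n = (5:ℝ) ^ ((α - 1) * n) := by
    intro n
    rw [hqdef, ← Real.rpow_natCast ((5:ℝ) ^ (α - 1)) n, ← Real.rpow_mul (by norm_num)]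
  have hτ' : ∀ n : ℕ, τ n = c * q ^ n := by
    intro n
    rw [hτ, hqn, hcdef, hqdef]
  have hτpos : ∀ n : ℕ, 0 < τ n := by
    intro n; rw [hτ']; positivity
  have htt' : ∀ n : ℕ, tt n = (1/2) * (1 - q ^ n) := by
    intro n
    rw [htt]
    have hsum : ∀ j ∈ Finset.range n, τ j = c * q ^ j := fun j _ => hτ' j
    rw [Finset.sum_congr rfl hsum, ← Finset.mul_sum, geom_sum_eq (ne_of_lt hq1), hcdef]
    have hq1' : q - 1 ≠ 0 := by intro h; apply absurd hq1; linarith [sub_eq_zero.mp h]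
    field_simp
    ring
  -- key multiplicative identity
  have hmul : ∀ n : ℕ, ∀ e : ℝ, (τ n)⁻¹ * (5:ℝ) ^ e = c⁻¹ * (5:ℝ) ^ (e - (α - 1) * n) := by
    intro n e
    rw [hτ' n, hqn n, mul_inv, ← Real.rpow_neg (by norm_num), mul_assoc,
      ← Real.rpow_add (by norm_num)]
    ring_nf
  refine ⟨2 * C₀ / c, ?_⟩
  intro t ht
  by_cases h12 : (1/2 : ℝ) ≤ t
  · constructor
    · intro x hx
      rw [hv0 t h12 x, norm_zero]
      positivity
    · intro x hx y hy
      rw [hv0 t h12 x, hv0 t h12 y, sub_zero, norm_zero]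
      have : (0:ℝ) ≤ ‖x - y‖ ^ α := Real.rpow_nonneg (norm_nonneg _) _
      positivity
  · push_neg at h12
    -- find the interval index n
    have hex : ∃ n : ℕ, t ≤ tt (n + 1) := by
      obtain ⟨m, hm⟩ := exists_pow_lt_of_lt_one (by linarith : (0:ℝ) < 1 - 2 * t) hq1
      refine ⟨m, ?_⟩
      rw [htt' (m + 1)]
      have : q ^ (m + 1) ≤ q ^ m := pow_le_pow_of_le_one hq0.le hq1.le (Nat.le_succ m)
      nlinarith
    set n := Nat.find hex with hn
    have h1 : t ≤ tt (n + 1) := Nat.find_spec hex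
    have h2 : tt n ≤ t := by
      rcases Nat.eq_zero_or_pos n with h | h
      · rw [h, htt' 0]; simpa using ht.1
      · have hmin := Nat.find_min hex (show n - 1 < n from Nat.sub_lt h one_pos)
        rw [Nat.sub_add_cancel h] at hmin
        push_neg at hmin
        exact hmin.le
    have hvt : ∀ x : ℝ × ℝ, v t x = (τ n)⁻¹ • U ((τ n)⁻¹ * (t - tt n) + n) x :=
      hv n t ⟨h2, h1⟩
    set s : ℝ := (τ n)⁻¹ * (t - tt n) + n with hsdef
    have hτn := hτpos n
    have hs1 : (n : ℝ) ≤ s := by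
      have h0 : 0 ≤ (τ n)⁻¹ * (t - tt n) :=
        mul_nonneg (inv_pos.mpr hτn).le (by linarith)
      rw [hsdef]; linarith
    have httsucc : tt (n + 1) = tt n + τ n := by
      rw [htt (n + 1), htt n, Finset.sum_range_succ]
    have hs2 : s ≤ (n : ℝ) + 1 := by
      have h3 : t - tt n ≤ τ n := by rw [httsucc] at h1; linarith
      have : (τ n)⁻¹ * (t - tt n) ≤ (τ n)⁻¹ * τ n := by
        apply mul_le_mul_of_nonneg_left h3 (by positivity)
      rw [inv_mul_cancel₀ (ne_of_gt hτn)] at this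
      rw [hsdef]; linarith
    have hs0 : (0:ℝ) ≤ s := le_trans (Nat.cast_nonneg n) hs1
    have hU1 : ∀ x ∈ B, ‖U s x‖ ≤ C₀ * (5:ℝ) ^ (-(n : ℝ)) := hULinf n s ⟨hs1, hs2⟩
    have hU2 : ∀ x ∈ B, ∀ y ∈ B, ‖U s x - U s y‖ ≤ C₀ * ‖x - y‖ := (hUW s hs0).2
    have hτinv : |(τ n)⁻¹| = (τ n)⁻¹ := abs_of_pos (by positivity)
    -- key products
    have hk1 : (τ n)⁻¹ * (5:ℝ) ^ (-(n : ℝ)) = c⁻¹ * (5:ℝ) ^ (-α * n) := by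
      rw [hmul n]; congr 1; ring_nf
    have hk2 : (5:ℝ) ^ (-α * (n:ℝ)) ≤ 1 :=
      Real.rpow_le_one_of_one_le_of_nonpos (by norm_num)
        (by nlinarith [Nat.cast_nonneg (α := ℝ) n])
    have hsup : ∀ x ∈ B, ‖v t x‖ ≤ 2 * C₀ / c := by
      intro x hx
      rw [hvt x, norm_smul, Real.norm_eq_abs, hτinv]
      calc (τ n)⁻¹ * ‖U s x‖ ≤ (τ n)⁻¹ * (C₀ * (5:ℝ) ^ (-(n : ℝ))) :=
            mul_le_mul_of_nonneg_left (hU1 x hx) (by positivity)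
        _ = C₀ * ((τ n)⁻¹ * (5:ℝ) ^ (-(n : ℝ))) := by ring
        _ = C₀ * (c⁻¹ * (5:ℝ) ^ (-α * n)) := by rw [hk1]
        _ ≤ C₀ * (c⁻¹ * 1) := by
            apply mul_le_mul_of_nonneg_left _ hC₀.le
            exact mul_le_mul_of_nonneg_left hk2 (by positivity)
        _ ≤ 2 * C₀ / c := by rw [mul_one, div_eq_mul_inv]; nlinarith [inv_pos.mpr hc0]
    refine ⟨hsup, ?_⟩
    intro x hx y hy
    have hvsub : ‖v t x - v t y‖ = (τ n)⁻¹ * ‖U s x - U s y‖ := by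
      rw [hvt x, hvt y, ← smul_sub, norm_smul, Real.norm_eq_abs, hτinv]
    rcases eq_or_lt_of_le (norm_nonneg (x - y)) with hr0 | hr0
    · have hxy : x = y := by
        have := (norm_eq_zero.mp hr0.symm); exact sub_eq_zero.mp this
      rw [hxy, sub_self, norm_zero, sub_self, norm_zero, Real.zero_rpow (ne_of_gt hα0)]
      simp
    · set r : ℝ := ‖x - y‖ with hrdef
      by_cases h5 : r ≤ (5:ℝ) ^ (-(n : ℝ))
      · -- Lipschitz regime
        have hr1 : r ^ ((1:ℝ) - α) ≤ ((5:ℝ) ^ (-(n:ℝ))) ^ ((1:ℝ) - α) :=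
          Real.rpow_le_rpow hr0.le h5 (by linarith)
        have hr2 : ((5:ℝ) ^ (-(n:ℝ))) ^ ((1:ℝ) - α) = (5:ℝ) ^ (-(n:ℝ) * (1 - α)) :=
          (Real.rpow_mul (by norm_num) _ _).symm
        have hrsplit : r ^ ((1:ℝ) - α) * r ^ α = r := by
          rw [← Real.rpow_add hr0, sub_add_cancel, Real.rpow_one]
        have hk3 : (τ n)⁻¹ * (5:ℝ) ^ (-(n:ℝ) * (1 - α)) = c⁻¹ := by
          rw [hmul n]
          have : -(n:ℝ) * (1 - α) - (α - 1) * n = 0 := by ring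
          rw [this, Real.rpow_zero, mul_one]
        rw [hvsub]
        calc (τ n)⁻¹ * ‖U s x - U s y‖ ≤ (τ n)⁻¹ * (C₀ * r) :=
              mul_le_mul_of_nonneg_left (hU2 x hx y hy) (by positivity)
          _ = (τ n)⁻¹ * C₀ * (r ^ ((1:ℝ) - α) * r ^ α) := by rw [hrsplit]; ring
          _ ≤ (τ n)⁻¹ * C₀ * ((5:ℝ) ^ (-(n:ℝ) * (1 - α)) * r ^ α) := by
              apply mul_le_mul_of_nonneg_left _ (mul_pos (inv_pos.mpr hτn) hC₀).le
              exact mul_le_mul_of_nonneg_right (hr2 ▸ hr1) (Real.rpow_nonneg hr0.le α)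
          _ = C₀ * c⁻¹ * r ^ α := by linear_combination C₀ * r ^ α * hk3
          _ ≤ 2 * C₀ / c * r ^ α := by
              apply mul_le_mul_of_nonneg_right _ (Real.rpow_nonneg hr0.le α)
              rw [div_eq_mul_inv]
              nlinarith [inv_pos.mpr hc0]
      · -- sup-norm regime
        push_neg at h5
        have hb : ‖U s x - U s y‖ ≤ 2 * (C₀ * (5:ℝ) ^ (-(n:ℝ))) := by
          calc ‖U s x - U s y‖ ≤ ‖U s x‖ + ‖U s y‖ := norm_sub_le _ _
            _ ≤ C₀ * (5:ℝ) ^ (-(n:ℝ)) + C₀ * (5:ℝ) ^ (-(n:ℝ)) :=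
                add_le_add (hU1 x hx) (hU1 y hy)
            _ = 2 * (C₀ * (5:ℝ) ^ (-(n:ℝ))) := by ring
        have hk4 : (5:ℝ) ^ (-α * (n:ℝ)) = ((5:ℝ) ^ (-(n:ℝ))) ^ α := by
          rw [← Real.rpow_mul (by norm_num)]
          congr 1; ring
        have hk5 : ((5:ℝ) ^ (-(n:ℝ))) ^ α ≤ r ^ α :=
          Real.rpow_le_rpow (Real.rpow_nonneg (by norm_num) _) h5.le hα0.le
        rw [hvsub]
        calc (τ n)⁻¹ * ‖U s x - U s y‖ ≤ (τ n)⁻¹ * (2 * (C₀ * (5:ℝ) ^ (-(n:ℝ)))) :=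
              mul_le_mul_of_nonneg_left hb (by positivity)
          _ = 2 * C₀ * ((τ n)⁻¹ * (5:ℝ) ^ (-(n:ℝ))) := by ring
          _ = 2 * C₀ * c⁻¹ * (5:ℝ) ^ (-α * n) := by rw [hk1]; ring
          _ ≤ 2 * C₀ * c⁻¹ * r ^ α := by
              apply mul_le_mul_of_nonneg_left _ (by positivity)
              rw [hk4]; exact hk5
          _ = 2 * C₀ / c * r ^ α := by rw [div_eq_mul_inv]
end

section
/- Let f : [0,1] → R satisfy: (i) there exist 0 = a_0 < a_1 < a_2 < ... with a_n → L ≤ 1 such that |f(t) − f(s)| ≤ C|t−s|^γ whenever s,t lie in the same interval [a_n, a_{n+1}] or in adjacent intervals, and (ii) |f(t)| ≤ C·ρ^n for t ∈ [a_n, a_{n+1}] where ρ ∈ (0,1) satisfies ρ ≤ (a_{n+2} − a_n)^γ·C for all n, and f ≡ 0 on [L, 1]. Then f ∈ C^{0,γ}([0,1]) with ‖f‖_{C^{0,γ}} ≤ C' for a constant C' depending only on C, γ, ρ. -/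
open Filter Set Topology

/-!
Take `s ≤ t` with `s ∈ [a m, a (m+1))`. If `t ≤ a (m+2)` the Hölder bound on adjacent intervals
applies directly, and if `t ≤ a (m+3)` it applies on both sides of `a (m+2)`. Otherwise
`t - s ≥ a (m+3) - a (m+1)`, so `ρ ^ (m+1) ≤ C (t - s) ^ γ`, while `|f s|` and `|f t|` are both at
most `C ρ ^ m ≤ (C² / ρ) (t - s) ^ γ`: beyond `a m` the sup bounds only decrease, and `f = 0` past
`L`.
-/

lemma exists_mem_Ico_of_le_of_lt {a : ℕ → ℝ} {s : ℝ} (h0 : a 0 ≤ s) (hs : ∃ n, s < a n) :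
    ∃ m, s ∈ Ico (a m) (a (m + 1)) := by
  classical
  have hfind : Nat.find hs ≠ 0 := fun h => (Nat.find_spec hs).not_ge (h ▸ h0)
  obtain ⟨m, hm⟩ := Nat.exists_eq_add_one_of_ne_zero hfind
  exact ⟨m, not_lt.mp (Nat.find_min hs (by omega)), hm ▸ Nat.find_spec hs⟩

lemma abs_sub_le_two_mul_rpow_of_mem_Icc {f : ℝ → ℝ} {C γ s u t : ℝ} (hC : 0 ≤ C) (hγ : 0 ≤ γ)
    (hu : u ∈ Icc s t) (hsu : |f u - f s| ≤ C * |u - s| ^ γ)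
    (hut : |f t - f u| ≤ C * |t - u| ^ γ) :
    |f t - f s| ≤ 2 * C * |t - s| ^ γ := by
  have hpow {x y : ℝ} (hx : s ≤ x) (hxy : x ≤ y) (hy : y ≤ t) : |y - x| ^ γ ≤ |t - s| ^ γ := by
    refine Real.rpow_le_rpow (abs_nonneg _) ?_ hγ
    rw [abs_of_nonneg (by linarith), abs_of_nonneg (by linarith)]
    linarith
  calc |f t - f s| ≤ |f t - f u| + |f u - f s| := abs_sub_le _ _ _
    _ ≤ C * |t - s| ^ γ + C * |t - s| ^ γ := by
        gcongr
        · exact hut.trans (mul_le_mul_of_nonneg_left (hpow hu.1 hu.2 le_rfl) hC)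
        · exact hsu.trans (mul_le_mul_of_nonneg_left (hpow le_rfl hu.1 hu.2) hC)
    _ = 2 * C * |t - s| ^ γ := by ring

structure HolderGluing (C γ ρ : ℝ) (f : ℝ → ℝ) (a : ℕ → ℝ) (L : ℝ) : Prop where
  monotone : Monotone a
  tendsto : Tendsto a atTop (𝓝 L)
  holder : ∀ n, ∀ s ∈ Icc (a n) (a (n + 1)), ∀ t ∈ Icc (a n) (a (n + 2)),
    |f t - f s| ≤ C * |t - s| ^ γ
  abs_le : ∀ n, ∀ t ∈ Icc (a n) (a (n + 1)), |f t| ≤ C * ρ ^ n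
  pow_le : ∀ n, ρ ^ n ≤ C * (a (n + 2) - a n) ^ γ
  eq_zero : ∀ t ∈ Icc L 1, f t = 0

namespace HolderGluing

variable {C γ ρ L : ℝ} {f : ℝ → ℝ} {a : ℕ → ℝ}

lemma exists_mem_Ico (h : HolderGluing C γ ρ f a L) {s : ℝ} (hs : a 0 ≤ s) (hsL : s < L) :
    ∃ m, s ∈ Ico (a m) (a (m + 1)) :=
  exists_mem_Ico_of_le_of_lt hs (h.tendsto.eventually (eventually_gt_nhds hsL)).exists

lemma abs_le_of_le (h : HolderGluing C γ ρ f a L) (hC : 0 ≤ C) (hρ0 : 0 ≤ ρ) (hρ1 : ρ ≤ 1)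
    {m : ℕ} {t : ℝ} (hmt : a m ≤ t) (ht : t ≤ 1) : |f t| ≤ C * ρ ^ m := by
  rcases le_or_gt L t with hLt | htL
  · rw [h.eq_zero t ⟨hLt, ht⟩, abs_zero]
    positivity
  obtain ⟨n, hn⟩ := h.exists_mem_Ico ((h.monotone (Nat.zero_le m)).trans hmt) htL
  have hmn : m ≤ n := Nat.lt_succ_iff.mp (h.monotone.reflect_lt (hmt.trans_lt hn.2))
  calc |f t| ≤ C * ρ ^ n := h.abs_le n t (Ico_subset_Icc_self hn)
    _ ≤ C * ρ ^ m := mul_le_mul_of_nonneg_left (pow_le_pow_of_le_one hρ0 hρ1 hmn) hC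

lemma mul_pow_le_of_gap_le (h : HolderGluing C γ ρ f a L) (hC : 0 ≤ C) (hγ : 0 ≤ γ) (hρ : 0 < ρ)
    {m : ℕ} {D : ℝ} (hD : a (m + 3) - a (m + 1) ≤ D) : C * ρ ^ m ≤ C ^ 2 / ρ * D ^ γ := by
  have hgap : ρ ^ (m + 1) ≤ C * D ^ γ :=
    (h.pow_le (m + 1)).trans <| mul_le_mul_of_nonneg_left
      (Real.rpow_le_rpow (sub_nonneg.2 (h.monotone (by omega))) hD hγ) hC
  rw [div_mul_eq_mul_div, le_div_iff₀ hρ]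
  calc C * ρ ^ m * ρ = C * ρ ^ (m + 1) := by ring
    _ ≤ C * (C * D ^ γ) := by gcongr
    _ = C ^ 2 * D ^ γ := by ring

lemma abs_sub_le_of_le (h : HolderGluing C γ ρ f a L) (hC : 0 ≤ C) (hγ : 0 ≤ γ) (hρ0 : 0 < ρ)
    (hρ1 : ρ ≤ 1) {s t : ℝ} (hs : a 0 ≤ s) (hst : s ≤ t) (ht : t ≤ 1) :
    |f t - f s| ≤ (2 * C + 2 * (C ^ 2 / ρ)) * |t - s| ^ γ := by
  have hK : 0 ≤ C ^ 2 / ρ := by positivity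
  have hpow : 0 ≤ |t - s| ^ γ := by positivity
  rcases le_or_gt L s with hLs | hsL
  · rw [h.eq_zero t ⟨hLs.trans hst, ht⟩, h.eq_zero s ⟨hLs, hst.trans ht⟩, sub_self, abs_zero]
    positivity
  obtain ⟨m, hm⟩ := h.exists_mem_Ico hs hsL
  have hsm : s ∈ Icc (a m) (a (m + 1)) := Ico_subset_Icc_self hm
  rcases le_total t (a (m + 2)) with ht2 | ht2
  · calc |f t - f s| ≤ C * |t - s| ^ γ := h.holder m s hsm t ⟨hm.1.trans hst, ht2⟩
      _ ≤ _ := mul_le_mul_of_nonneg_right (by linarith) hpow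
  rcases le_total t (a (m + 3)) with ht3 | ht3
  · calc |f t - f s| ≤ 2 * C * |t - s| ^ γ :=
          abs_sub_le_two_mul_rpow_of_mem_Icc hC hγ ⟨hm.2.le.trans (h.monotone (by omega)), ht2⟩
            (h.holder m s hsm _ ⟨h.monotone (by omega), le_rfl⟩)
            (h.holder (m + 2) _ ⟨le_rfl, h.monotone (by omega)⟩ t
              ⟨ht2, ht3.trans (h.monotone (by omega))⟩)
      _ ≤ _ := mul_le_mul_of_nonneg_right (by linarith) hpow
  have hdecay : C * ρ ^ m ≤ C ^ 2 / ρ * |t - s| ^ γ :=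
    h.mul_pow_le_of_gap_le hC hγ hρ0 (by rw [abs_of_nonneg (sub_nonneg.2 hst)]; linarith [hm.2])
  calc |f t - f s| ≤ |f t| + |f s| := abs_sub _ _
    _ ≤ C * ρ ^ m + C * ρ ^ m :=
        add_le_add (h.abs_le_of_le hC hρ0.le hρ1 (hm.1.trans hst) ht) (h.abs_le m s hsm)
    _ ≤ 2 * (C ^ 2 / ρ) * |t - s| ^ γ := by linarith
    _ ≤ _ := mul_le_mul_of_nonneg_right (by linarith) hpow

lemma abs_sub_le (h : HolderGluing C γ ρ f a L) (hC : 0 ≤ C) (hγ : 0 ≤ γ) (hρ0 : 0 < ρ)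
    (hρ1 : ρ ≤ 1) {s t : ℝ} (hs : s ∈ Icc (a 0) 1) (ht : t ∈ Icc (a 0) 1) :
    |f t - f s| ≤ (2 * C + 2 * (C ^ 2 / ρ)) * |t - s| ^ γ := by
  rcases le_total s t with hst | hts
  · exact h.abs_sub_le_of_le hC hγ hρ0 hρ1 hs.1 hst ht.2
  · rw [abs_sub_comm, abs_sub_comm t]
    exact h.abs_sub_le_of_le hC hγ hρ0 hρ1 ht.1 hts hs.2

end HolderGluing

/-- gluing Hölder estimates on adjacent intervals [a_n, a_{n+1}] with
geometrically decaying sup norms yields a global C^{0,γ} bound on [0,1],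
with constant depending only on C, γ, ρ. -/
theorem stmt18 (C γ ρ : ℝ) (hC : 0 < C) (hγ : 0 < γ) (hρ : ρ ∈ Set.Ioo (0:ℝ) 1) :
    ∃ C' > (0:ℝ), ∀ (f : ℝ → ℝ) (a : ℕ → ℝ) (L : ℝ),
      a 0 = 0 → StrictMono a → Tendsto a atTop (nhds L) → L ≤ 1 →
      (∀ n : ℕ, ∀ s ∈ Set.Icc (a n) (a (n + 1)), ∀ t ∈ Set.Icc (a n) (a (n + 2)),
        |f t - f s| ≤ C * |t - s| ^ γ) →
      (∀ n : ℕ, ∀ t ∈ Set.Icc (a n) (a (n + 1)), |f t| ≤ C * ρ ^ n) →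
      (∀ n : ℕ, ρ ^ n ≤ C * (a (n + 2) - a n) ^ γ) →
      (∀ t ∈ Set.Icc L (1:ℝ), f t = 0) →
      (∀ s ∈ Set.Icc (0:ℝ) 1, ∀ t ∈ Set.Icc (0:ℝ) 1, |f t - f s| ≤ C' * |t - s| ^ γ) ∧
        (∀ t ∈ Set.Icc (0:ℝ) 1, |f t| ≤ C') := by
  obtain ⟨hρ0, hρ1⟩ := hρ
  refine ⟨2 * C + 2 * (C ^ 2 / ρ), by positivity,
    fun f a L ha0 hmono hlim _ hholder habs hpow hzero => ?_⟩
  have h : HolderGluing C γ ρ f a L := ⟨hmono.monotone, hlim, hholder, habs, hpow, hzero⟩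
  rw [← ha0]
  refine ⟨fun s hs t ht => h.abs_sub_le hC.le hγ.le hρ0 hρ1.le hs ht, fun t ht => ?_⟩
  have hK : 0 ≤ C ^ 2 / ρ := by positivity
  calc |f t| ≤ C * ρ ^ 0 := h.abs_le_of_le hC.le hρ0.le hρ1.le ht.1 ht.2
    _ ≤ 2 * C + 2 * (C ^ 2 / ρ) := by rw [pow_zero, mul_one]; linarith
end
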